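/- arXiv:1006.3337 — 2 statements merged into one kernel-verified Lean document; each statement's English description precedes it below -/
import Mathlib

section
/- Let u(t) = √(ȳ/V₀)·sinh(t/2)/sinh(T/2) − e^{−T/2}·sinh(t/2)/sinh(T/2) + e^{−t/2} on [0,T] with ȳ > V₀ > 0. If ȳ/V₀ > (1 + 2 sinh(T/2))², then u'(t) ≥ u'(0) ≥ 1/4 for all t ∈ [0,T]. -/
/-! Writing c = (√(ȳ/V₀) − e^{−T/2}) / sinh(T/2), the function is u(t) = c·sinh(t/2) + e^{−t/2},
with u'(t) = (c·cosh(t/2) − e^{−t/2})/2. For c ≥ 0 both terms make u' grow on [0, ∞), since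
cosh(t/2) ≥ 1 ≥ e^{−t/2}. The hypothesis gives √(ȳ/V₀) > 1 + 2 sinh(T/2), hence c > 2 because
e^{−T/2} < 1, and so u'(0) = (c − 1)/2 > 1/2. -/

open Real

noncomputable def sinhHalfAddExpNegHalf (c t : ℝ) : ℝ := c * sinh (t / 2) + exp (-t / 2)

lemma hasDerivAt_sinhHalfAddExpNegHalf (c t : ℝ) :
    HasDerivAt (sinhHalfAddExpNegHalf c) ((c * cosh (t / 2) - exp (-t / 2)) / 2) t := by
  have hsinh := ((hasDerivAt_id' t).div_const 2).sinh.const_mul c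
  have hexp := ((hasDerivAt_neg t).div_const 2).exp
  exact (hsinh.add hexp).congr_deriv (by ring)

lemma deriv_sinhHalfAddExpNegHalf (c t : ℝ) :
    deriv (sinhHalfAddExpNegHalf c) t = (c * cosh (t / 2) - exp (-t / 2)) / 2 :=
  (hasDerivAt_sinhHalfAddExpNegHalf c t).deriv

lemma deriv_sinhHalfAddExpNegHalf_zero (c : ℝ) :
    deriv (sinhHalfAddExpNegHalf c) 0 = (c - 1) / 2 := by
  simp [deriv_sinhHalfAddExpNegHalf]

lemma deriv_sinhHalfAddExpNegHalf_zero_le {c t : ℝ} (hc : 0 ≤ c) (ht : 0 ≤ t) :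
    deriv (sinhHalfAddExpNegHalf c) 0 ≤ deriv (sinhHalfAddExpNegHalf c) t := by
  rw [deriv_sinhHalfAddExpNegHalf_zero, deriv_sinhHalfAddExpNegHalf]
  have hcosh : c * 1 ≤ c * cosh (t / 2) := mul_le_mul_of_nonneg_left (one_le_cosh _) hc
  have hexp : exp (-t / 2) ≤ 1 := exp_le_one_iff.mpr (by linarith)
  linarith

theorem stmt7_general (T V₀ ybar : ℝ) (hT : 0 < T)
    (hcond : (1 + 2 * Real.sinh (T / 2)) ^ 2 < ybar / V₀)
    (u : ℝ → ℝ)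
    (hu : u = fun t => Real.sqrt (ybar / V₀) * (Real.sinh (t / 2) / Real.sinh (T / 2))
      - Real.exp (-T / 2) * (Real.sinh (t / 2) / Real.sinh (T / 2))
      + Real.exp (-t / 2)) :
    ∀ t ∈ Set.Icc (0:ℝ) T, 1 / 4 ≤ deriv u 0 ∧ deriv u 0 ≤ deriv u t := by
  set c := (√(ybar / V₀) - exp (-T / 2)) / sinh (T / 2)
  have hu' : u = sinhHalfAddExpNegHalf c := by
    rw [hu]; ext t; simp only [sinhHalfAddExpNegHalf, c]; ring
  have hs : 0 < sinh (T / 2) := sinh_pos_iff.mpr (by linarith)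
  have hsqrt : 1 + 2 * sinh (T / 2) < √(ybar / V₀) := lt_sqrt_of_sq_lt hcond
  have hE : exp (-T / 2) < 1 := exp_lt_one_iff.mpr (by linarith)
  have hc : 2 < c := by rw [lt_div_iff₀ hs]; linarith
  rintro t ⟨ht, -⟩
  rw [hu']
  refine ⟨?_, deriv_sinhHalfAddExpNegHalf_zero_le (by linarith) ht⟩
  rw [deriv_sinhHalfAddExpNegHalf_zero]
  linarith

theorem stmt7 (T V₀ ybar : ℝ) (hT : 0 < T) (hV : 0 < V₀) (hy : V₀ < ybar)
    (hcond : (1 + 2 * Real.sinh (T / 2)) ^ 2 < ybar / V₀)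
    (u : ℝ → ℝ)
    (hu : u = fun t => Real.sqrt (ybar / V₀) * (Real.sinh (t / 2) / Real.sinh (T / 2))
      - Real.exp (-T / 2) * (Real.sinh (t / 2) / Real.sinh (T / 2))
      + Real.exp (-t / 2)) :
    ∀ t ∈ Set.Icc (0:ℝ) T, 1 / 4 ≤ deriv u 0 ∧ deriv u 0 ≤ deriv u t :=
  stmt7_general T V₀ ybar hT hcond u hu
end

section
/- Let u(t) = √(ȳ/V₀)·sinh(t/2)/sinh(T/2) − e^{−T/2}·sinh(t/2)/sinh(T/2) + e^{−t/2} with ȳ > V₀ > 0 and ȳ/V₀ > (1+2sinh(T/2))². Then u and u' are increasing on [0,T], sup u = u(T) = √(ȳ/V₀), and sup u' = u'(T) ≤ √(ȳ/V₀)/(2 tanh(T/2)). -/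
/-!
With `s = √(ȳ/V₀)` and `A = (s - e^{-T/2}) / sinh (T/2)`, the function is
`u t = A sinh (t/2) + e^{-t/2}`, so `2 u' t = A cosh (t/2) - e^{-t/2}` is increasing on `[0, ∞)`
whenever `A ≥ 0`. The hypothesis `s > 1 + 2 sinh (T/2)` gives `A ≥ 1`, i.e. `u' 0 ≥ 0`, hence
`u' ≥ 0` and `u` is increasing too. The bound on `u' T` comes from dropping `e^{-T/2}` twice.
-/

open Real Set

namespace SinhExpProfile

noncomputable section

def profile (A t : ℝ) : ℝ := A * sinh (t / 2) + exp (-t / 2)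

def profileDeriv (A t : ℝ) : ℝ := (A * cosh (t / 2) - exp (-t / 2)) / 2

theorem hasDerivAt_profile (A t : ℝ) : HasDerivAt (profile A) (profileDeriv A t) t := by
  have hhalf : HasDerivAt (fun t : ℝ => t / 2) (1 / 2) t := (hasDerivAt_id t).div_const 2
  have hsinh := (hasDerivAt_sinh (t / 2)).comp t hhalf
  have hneg : HasDerivAt (fun t : ℝ => -t / 2) (-(1 / 2)) t := by
    simpa only [neg_div] using hhalf.fun_neg
  have hexp := (hasDerivAt_exp (-t / 2)).comp t hneg
  exact ((hsinh.const_mul A).fun_add hexp).congr_deriv (by simp only [profileDeriv]; ring)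

theorem deriv_profile (A : ℝ) : deriv (profile A) = profileDeriv A :=
  funext fun t => (hasDerivAt_profile A t).deriv

theorem differentiable_profile (A : ℝ) : Differentiable ℝ (profile A) :=
  fun t => (hasDerivAt_profile A t).differentiableAt

theorem monotoneOn_profileDeriv {A : ℝ} (hA : 0 ≤ A) : MonotoneOn (profileDeriv A) (Ici 0) := by
  intro x hx y hy hxy
  have hcosh : cosh (x / 2) ≤ cosh (y / 2) :=
    cosh_strictMonoOn.monotoneOn (mem_Ici.2 (by linarith [mem_Ici.1 hx]))
      (mem_Ici.2 (by linarith [mem_Ici.1 hy])) (by linarith)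
  have hexp : exp (-y / 2) ≤ exp (-x / 2) := exp_le_exp.2 (by linarith)
  have := mul_le_mul_of_nonneg_left hcosh hA
  simp only [profileDeriv]
  linarith

theorem profileDeriv_nonneg {A : ℝ} (hA : 1 ≤ A) {t : ℝ} (ht : 0 ≤ t) : 0 ≤ profileDeriv A t :=
  calc 0 ≤ profileDeriv A 0 := by
        rw [profileDeriv, zero_div, cosh_zero, neg_zero, zero_div, exp_zero]; linarith
    _ ≤ profileDeriv A t :=
      monotoneOn_profileDeriv (by linarith) self_mem_Ici (mem_Ici.2 ht) ht

theorem monotoneOn_profile {A : ℝ} (hA : 1 ≤ A) : MonotoneOn (profile A) (Ici 0) :=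
  monotoneOn_of_deriv_nonneg (convex_Ici 0) (differentiable_profile A).continuous.continuousOn
    (differentiable_profile A).differentiableOn fun _ ht => by
      rw [deriv_profile]; exact profileDeriv_nonneg hA (interior_subset ht)

def boundaryCoeff (s T : ℝ) : ℝ := (s - exp (-T / 2)) / sinh (T / 2)

theorem profile_boundaryCoeff_self (s : ℝ) {T : ℝ} (hT : T ≠ 0) :
    profile (boundaryCoeff s T) T = s := by
  have hsinh : sinh (T / 2) ≠ 0 := sinh_ne_zero.2 (div_ne_zero hT two_ne_zero)
  simp only [profile, boundaryCoeff]
  field_simp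
  ring

theorem one_le_boundaryCoeff {s T : ℝ} (hT : 0 < T) (hs : sinh (T / 2) + exp (-T / 2) ≤ s) :
    1 ≤ boundaryCoeff s T :=
  (one_le_div (sinh_pos_iff.2 (half_pos hT))).2 (by linarith)

theorem profileDeriv_boundaryCoeff_le (s : ℝ) {T : ℝ} (hT : 0 < T) :
    profileDeriv (boundaryCoeff s T) T ≤ s / (2 * tanh (T / 2)) := by
  have hsinh : 0 < sinh (T / 2) := sinh_pos_iff.2 (half_pos hT)
  have hexp := exp_pos (-T / 2)
  have hcoeff : boundaryCoeff s T * cosh (T / 2) ≤ s * cosh (T / 2) / sinh (T / 2) := by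
    rw [boundaryCoeff, div_mul_eq_mul_div, div_le_div_iff_of_pos_right hsinh]
    exact mul_le_mul_of_nonneg_right (by linarith) (cosh_pos _).le
  calc profileDeriv (boundaryCoeff s T) T ≤ boundaryCoeff s T * cosh (T / 2) / 2 := by
        rw [profileDeriv]; linarith
    _ ≤ s * cosh (T / 2) / sinh (T / 2) / 2 := by linarith
    _ = s / (2 * tanh (T / 2)) := by
        rw [tanh_eq_sinh_div_cosh]
        field_simp

end

end SinhExpProfile

open SinhExpProfile

theorem stmt8_general (T V₀ ybar : ℝ) (hT : 0 < T)
    (hcond : (1 + 2 * Real.sinh (T / 2)) ^ 2 < ybar / V₀)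
    (u : ℝ → ℝ)
    (hu : u = fun t => Real.sqrt (ybar / V₀) * (Real.sinh (t / 2) / Real.sinh (T / 2))
      - Real.exp (-T / 2) * (Real.sinh (t / 2) / Real.sinh (T / 2))
      + Real.exp (-t / 2)) :
    MonotoneOn u (Set.Icc 0 T) ∧ MonotoneOn (deriv u) (Set.Icc 0 T) ∧
    u T = Real.sqrt (ybar / V₀) ∧
    (∀ t ∈ Set.Icc (0:ℝ) T, u t ≤ u T) ∧
    (∀ t ∈ Set.Icc (0:ℝ) T, deriv u t ≤ deriv u T) ∧
    deriv u T ≤ Real.sqrt (ybar / V₀) / (2 * Real.tanh (T / 2)) := by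
  set s := √(ybar / V₀)
  have hs : 1 + 2 * sinh (T / 2) < s := (lt_sqrt (by positivity)).2 hcond
  have hexp : exp (-T / 2) < 1 := exp_lt_one_iff.2 (by linarith)
  have hA : 1 ≤ boundaryCoeff s T :=
    one_le_boundaryCoeff hT (by linarith [sinh_pos_iff.2 (half_pos hT)])
  have hu_eq : u = profile (boundaryCoeff s T) := by
    subst hu
    funext t
    simp only [profile, boundaryCoeff]
    ring
  have hmono : MonotoneOn u (Icc 0 T) := hu_eq ▸ (monotoneOn_profile hA).mono Icc_subset_Ici_self
  have hmono' : MonotoneOn (deriv u) (Icc 0 T) :=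
    hu_eq ▸ deriv_profile _ ▸ (monotoneOn_profileDeriv (by linarith)).mono Icc_subset_Ici_self
  have hTmem : T ∈ Icc 0 T := right_mem_Icc.2 hT.le
  refine ⟨hmono, hmono', hu_eq ▸ profile_boundaryCoeff_self s hT.ne',
    fun t ht => hmono ht hTmem ht.2, fun t ht => hmono' ht hTmem ht.2, ?_⟩
  rw [hu_eq, deriv_profile]
  exact profileDeriv_boundaryCoeff_le s hT

theorem stmt8 (T V₀ ybar : ℝ) (hT : 0 < T) (hV : 0 < V₀) (hy : V₀ < ybar)
    (hcond : (1 + 2 * Real.sinh (T / 2)) ^ 2 < ybar / V₀)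
    (u : ℝ → ℝ)
    (hu : u = fun t => Real.sqrt (ybar / V₀) * (Real.sinh (t / 2) / Real.sinh (T / 2))
      - Real.exp (-T / 2) * (Real.sinh (t / 2) / Real.sinh (T / 2))
      + Real.exp (-t / 2)) :
    MonotoneOn u (Set.Icc 0 T) ∧ MonotoneOn (deriv u) (Set.Icc 0 T) ∧
    u T = Real.sqrt (ybar / V₀) ∧
    (∀ t ∈ Set.Icc (0:ℝ) T, u t ≤ u T) ∧
    (∀ t ∈ Set.Icc (0:ℝ) T, deriv u t ≤ deriv u T) ∧
    deriv u T ≤ Real.sqrt (ybar / V₀) / (2 * Real.tanh (T / 2)) :=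
  stmt8_general T V₀ ybar hT hcond u hu
end
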